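/- In the coin-tossing construction, assume the forward branching process (U_k)_{k≥0} is started from level u₀ = 1 and the walk (X_n)_{n≥0} is started from X_0 = 1, both built from the same array (ξ_i^k)_{k∈ℤ, i∈ℕ}. Let τ_0^X = inf{n > 0 : X_n = 0} and U'_k = |{0 ≤ n < τ_0^X : X_n = k, X_{n+1} = k+1}| for k ≥ 1. Then for any realization of (ξ_i^k)_{k∈ℤ, i∈ℕ}, U'_k ≤ U_k for all k ≥ 1; moreover, for any realization such that τ_0^X < ∞, U'_k = U_k for all k ≥ 1. -/

import Mathlib

open MeasureTheory Filter Set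
open scoped ENNReal NNReal Classical

noncomputable section

namespace ERW

variable {𝒮 : Type}

/-! ### Transition matrices, stationary distributions, uniform ergodicity -/

/-- `n`-step transition probabilities of a transition matrix `K` on a countable state space. -/
def matPow (K : 𝒮 → 𝒮 → ℝ) : ℕ → 𝒮 → 𝒮 → ℝ
  | 0 => fun s t => if s = t then 1 else 0
  | n + 1 => fun s t => ∑' u, matPow K n s u * K u t

/-- A (row-)stochastic transition matrix. -/
structure IsTransMatrix (K : 𝒮 → 𝒮 → ℝ) : Prop where
  nonneg : ∀ s t, 0 ≤ K s t
  rowSum : ∀ s, HasSum (K s) 1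

/-- A stationary probability distribution for the transition matrix `K`. -/
structure IsStationaryDist (K : 𝒮 → 𝒮 → ℝ) (π : 𝒮 → ℝ) : Prop where
  nonneg : ∀ s, 0 ≤ π s
  total : HasSum π 1
  invariant : ∀ t, HasSum (fun s => π s * K s t) (π t)

/-- Total variation distance between two distributions on a countable space. -/
def tvDist (μ ν : 𝒮 → ℝ) : ℝ := (1 / 2) * ∑' s, |μ s - ν s|

/-- A uniformly ergodic Markov transition matrix: irreducible, aperiodic, positive
recurrent (equivalently: possessing an everywhere-positive stationary distribution `π`),
with uniform total-variation convergence of the `n`-step distributions to `π`. -/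
structure UniformlyErgodic (K : 𝒮 → 𝒮 → ℝ) (π : 𝒮 → ℝ) : Prop where
  trans : IsTransMatrix K
  irred : ∀ s t, ∃ n, 0 < matPow K n s t
  aperiodic : ∀ s, ∃ N, ∀ n, N ≤ n → 0 < matPow K n s s
  stat : IsStationaryDist K π
  statPos : ∀ s, 0 < π s
  unifTV : Tendsto (fun n => ⨆ s, tvDist (matPow K n s) π) atTop (nhds 0)

/-! ### Path laws of Markov chains -/

/-- One-sided cylinder set. -/
def cylN {α : Type*} (n : ℕ) (f : ℕ → α) : Set (ℕ → α) := {g | ∀ m, m ≤ n → g m = f m}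

/-- `μ` is the law of the time-homogeneous Markov chain with transition matrix `K`
started at `x`. -/
structure IsChainLaw {𝒵 : Type} [MeasurableSpace 𝒵] (K : 𝒵 → 𝒵 → ℝ) (x : 𝒵)
    (μ : Measure (ℕ → 𝒵)) : Prop where
  prob : IsProbabilityMeasure μ
  start : μ {f | f 0 = x} = 1
  step : ∀ (n : ℕ) (f : ℕ → 𝒵),
    μ (cylN (n + 1) f) = μ (cylN n f) * ENNReal.ofReal (K (f n) (f (n + 1)))

/-- Two-sided cylinder set. -/
def cylZ (a b : ℤ) (f : ℤ → 𝒮) : Set (ℤ → 𝒮) := {g | ∀ k : ℤ, a ≤ k → k ≤ b → g k = f k}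

/-- `μ` is the law of a two-sided process `(S_k)_{k ∈ ℤ}` which is a time-homogeneous
Markov chain with transition matrix `K`, and whose time reversal `R_k = S_{-k}` is a
time-homogeneous Markov chain with transition matrix `Krev`. -/
structure IsTwoSidedChainLaw [MeasurableSpace 𝒮] (K Krev : 𝒮 → 𝒮 → ℝ)
    (μ : Measure (ℤ → 𝒮)) : Prop where
  prob : IsProbabilityMeasure μ
  forward : ∀ a b : ℤ, a ≤ b → ∀ f : ℤ → 𝒮,
    μ (cylZ a (b + 1) f) = μ (cylZ a b f) * ENNReal.ofReal (K (f b) (f (b + 1)))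
  backward : ∀ a b : ℤ, a ≤ b → ∀ f : ℤ → 𝒮,
    μ (cylZ (a - 1) b f) = μ (cylZ a b f) * ENNReal.ofReal (Krev (f a) (f (a - 1)))

/-! ### Cookie environments and Assumption (A) -/

/-- The cookie environment determined by a realization `g` of the stack-valued chain:
`ω(k, i) = S_k(i)`. -/
def envOf (stack : 𝒮 → ℕ → ℝ) (g : ℤ → 𝒮) : ℤ → ℕ → ℝ := fun k i => stack (g k) i

/-- Assumption (A): the environment is built from a two-sided stack-valued process
`(S_k)` taking values in a countable set of elliptic cookie stacks of height `M`, such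
that both `(S_k)` and the reversed process `(R_k) = (S_{-k})` are uniformly ergodic
Markov chains (with common stationary distribution `π`). -/
structure AssumptionA [MeasurableSpace 𝒮] (M : ℕ) (stack : 𝒮 → ℕ → ℝ)
    (K Krev : 𝒮 → 𝒮 → ℝ) (π : 𝒮 → ℝ) (Senv : Measure (ℤ → 𝒮)) : Prop where
  countable : Countable 𝒮
  posM : 1 ≤ M
  stackElliptic : ∀ s, ∀ i : ℕ, 1 ≤ i → i ≤ M → stack s i ∈ Set.Ioo (0 : ℝ) 1
  stackHalf : ∀ s, ∀ i : ℕ, M < i → stack s i = 1 / 2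
  stackInj : Function.Injective stack
  chain : IsTwoSidedChainLaw K Krev Senv
  ergS : UniformlyErgodic K π
  ergR : UniformlyErgodic Krev π

/-- The drift parameter `δ = ∑_s π(s) ∑_{i=1}^M (2 s(i) - 1)`. -/
def drift (M : ℕ) (stack : 𝒮 → ℕ → ℝ) (π : 𝒮 → ℝ) : ℝ :=
  ∑' s, π s * ∑ i ∈ Finset.Icc 1 M, (2 * stack s i - 1)

/-! ### The excited random walk: quenched laws -/

/-- `I_n`: the number of visits of the walk `X` to its current site up to time `n`. -/
def visits (X : ℕ → ℤ) (n : ℕ) : ℕ :=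
  ((Finset.range (n + 1)).filter fun m => X m = X n).card

/-- One-step transition probability of the excited random walk in environment `ω`. -/
def stepProb (ω : ℤ → ℕ → ℝ) (X : ℕ → ℤ) (n : ℕ) : ℝ :=
  if X (n + 1) = X n + 1 then ω (X n) (visits X n)
  else if X (n + 1) = X n - 1 then 1 - ω (X n) (visits X n)
  else 0

/-- `μ` is the quenched law of the excited random walk in environment `ω` started
at `x₀`. -/
structure IsQuenchedLaw (ω : ℤ → ℕ → ℝ) (x₀ : ℤ) (μ : Measure (ℕ → ℤ)) : Prop where
  prob : IsProbabilityMeasure μ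
  start : μ {X | X 0 = x₀} = 1
  step : ∀ (n : ℕ) (x : ℕ → ℤ),
    μ (cylN (n + 1) x) = μ (cylN n x) * ENNReal.ofReal (stepProb ω x n)

/-! ### Coin tossing construction -/

/-- `μ` is the law of the independent array of coins `(ξ_i^k)` with
`P(ξ_i^k = 1) = ω(k, i)`. -/
structure IsCoinLaw (ω : ℤ → ℕ → ℝ) (μ : Measure (ℤ → ℕ → Bool)) : Prop where
  prob : IsProbabilityMeasure μ
  cyl : ∀ (F : Finset (ℤ × ℕ)) (v : ℤ × ℕ → Bool),
    μ {ξ | ∀ p ∈ F, ξ p.1 p.2 = v p} =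
      ∏ p ∈ F, ENNReal.ofReal (if v p = true then ω p.1 p.2 else 1 - ω p.1 p.2)

/-- Number of failures among the coins `ξ_1, …, ξ_{i-1}`. -/
def failBefore (b : ℕ → Bool) (i : ℕ) : ℕ :=
  ((Finset.Ico 1 i).filter fun j => b j = false).card

/-- Number of successes among the coins `ξ_1, …, ξ_{i-1}`. -/
def succBefore (b : ℕ → Bool) (i : ℕ) : ℕ :=
  ((Finset.Ico 1 i).filter fun j => b j = true).card

/-- Number of successes in the sequence `b` before the `m`-th failure. -/
def succCount (b : ℕ → Bool) (m : ℕ∞) : ℕ∞ :=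
  {i : ℕ | 1 ≤ i ∧ b i = true ∧ (failBefore b i : ℕ∞) < m}.encard

/-- Number of failures in the sequence `b` before the `m`-th success. -/
def failCount (b : ℕ → Bool) (m : ℕ∞) : ℕ∞ :=
  {i : ℕ | 1 ≤ i ∧ b i = false ∧ (succBefore b i : ℕ∞) < m}.encard

/-- The forward branching process built from the coin array `ξ`. -/
def Uproc (ξ : ℤ → ℕ → Bool) (u₀ : ℕ∞) : ℕ → ℕ∞
  | 0 => u₀
  | k + 1 => succCount (ξ ((k : ℤ) + 1)) (Uproc ξ u₀ k)

/-- The backward branching process built from the coin array `ξ`. -/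
def Vproc (ξ : ℤ → ℕ → Bool) (v₀ : ℕ∞) : ℕ → ℕ∞
  | 0 => v₀
  | k + 1 => failCount (ξ (-((k : ℤ) + 1))) (Vproc ξ v₀ k + 1)

/-- Auxiliary: position of the coin-tossing walk together with its visit counts. -/
def walkAux (ξ : ℤ → ℕ → Bool) (x : ℤ) : ℕ → ℤ × (ℤ → ℕ)
  | 0 => (x, fun z => if z = x then 1 else 0)
  | n + 1 =>
      let p := walkAux ξ x n
      let pos := p.1 + (if ξ p.1 (p.2 p.1) = true then 1 else -1)
      (pos, fun z => if z = pos then p.2 z + 1 else p.2 z)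

/-- The excited random walk constructed from the coin array `ξ`, started at `x`:
`X_{n+1} = X_n + (2 ξ_{I_n}^{X_n} - 1)`. -/
def cwalk (ξ : ℤ → ℕ → Bool) (x : ℤ) (n : ℕ) : ℤ := (walkAux ξ x n).1

/-! ### `ℕ∞`-valued stopping-time helpers -/

/-- Canonical map `ℕ∞ → ℝ≥0∞`. -/
def toE (v : ℕ∞) : ℝ≥0∞ := if v = ⊤ then ⊤ else (v.toNat : ℝ≥0∞)

/-- Value of a process at a possibly infinite time (`⊤` at time `⊤`). -/
def stopVal (u : ℕ → ℕ∞) (τ : ℕ∞) : ℕ∞ := if τ = ⊤ then ⊤ else u τ.toNat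

/-- Sum `∑_{k=0}^τ u_k` of a process up to a possibly infinite time. -/
def sumTo (u : ℕ → ℕ∞) (τ : ℕ∞) : ℕ∞ :=
  if τ = ⊤ then ⊤ else ∑ k ∈ Finset.range (τ.toNat + 1), u k

/-- First time `m > 0` at which `p` holds (`⊤` if never). -/
def hitTime (p : ℕ → Prop) : ℕ∞ := ⨅ (m : ℕ) (_ : 0 < m ∧ p m), (m : ℕ∞)

/-- First time strictly after `t` at which `p` holds. -/
def nextHit (p : ℕ → Prop) (t : ℕ∞) : ℕ∞ := ⨅ (m : ℕ) (_ : t < (m : ℕ∞) ∧ p m), (m : ℕ∞)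

/-- Successive times `≥ 0` at which `p` holds. -/
def retTime (p : ℕ → Prop) : ℕ → ℕ∞
  | 0 => ⨅ (m : ℕ) (_ : p m), (m : ℕ∞)
  | k + 1 => nextHit p (retTime p k)

/-- `|v - x| ≥ c` for `v : ℕ∞` (where `⊤` is infinitely far from `x`). -/
def devGE (v : ℕ∞) (x : ℕ) (c : ℝ) : Prop := v = ⊤ ∨ c ≤ |(v.toNat : ℝ) - (x : ℝ)|

/-- `v > c` for `v : ℕ∞`, `c : ℝ`. -/
def gtReal (v : ℕ∞) (c : ℝ) : Prop := v = ⊤ ∨ c < (v.toNat : ℝ)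

/-- `v < c` for `v : ℕ∞`, `c : ℝ`. -/
def ltReal (v : ℕ∞) (c : ℝ) : Prop := v ≠ ⊤ ∧ (v.toNat : ℝ) < c

/-- `τ_s^S`: first positive hitting time of the stack `s` by the forward chain. -/
def tauS (s : 𝒮) (g : ℤ → 𝒮) : ℕ∞ := hitTime fun m => g (m : ℤ) = s

/-- `τ_s^R`: first positive hitting time of the stack `s` by the reversed chain. -/
def tauR (s : 𝒮) (g : ℤ → 𝒮) : ℕ∞ := hitTime fun m => g (-(m : ℤ)) = s

/-- The environment law conditioned on `S_0 = s`. -/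
def condAt [MeasurableSpace 𝒮] (Senv : Measure (ℤ → 𝒮)) (s : 𝒮) : Measure (ℤ → 𝒮) :=
  ProbabilityTheory.cond Senv {g | g 0 = s}

/-- `μ_s`: the mean return time to `s` of the chain started from `s`. -/
def meanReturn [MeasurableSpace 𝒮] (Senv : Measure (ℤ → 𝒮)) (s : 𝒮) : ℝ :=
  (∫⁻ g, toE (tauS s g) ∂condAt Senv s).toReal

/-- The observed backward branching process `V̂_k = V_{τ_k}`, where `τ_k` are the
successive times `j ≥ 0` with `R_j = s`. -/
def VhatProc (s : 𝒮) (g : ℤ → 𝒮) (ξ : ℤ → ℕ → Bool) (v₀ : ℕ∞) (k : ℕ) : ℕ∞ :=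
  stopVal (Vproc ξ v₀) (retTime (fun m => g (-(m : ℤ)) = s) k)

/-!
The walk uses the coins at a site `z` in order, so among the coins it has used at `z` the
failures are its jumps `z → z - 1` and the successes its jumps `z → z + 1`. Jumps across an
edge `{k, k + 1}` alternate; counting `U₀ = 1` as a jump `0 → 1`, each jump `k + 1 → k + 2`
before `τ₀` thus comes after fewer jumps `k + 1 → k` than jumps `k → k + 1`, i.e. after fewer
than `U'_k ≤ U_k` failures at `k + 1` (induction on `k`), so the coin it uses is one of the
`U_{k+1}` successes before the `U_k`-th failure. If the walk reaches `0`, it has left each site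
`k + 1` downwards exactly `U'_k = U_k` times, the last time for good, so the successes it has
used at `k + 1` are exactly those before the `U_k`-th failure.
-/

section Coins

variable (b : ℕ → Bool)

lemma failBefore_succ {i : ℕ} (hi : 1 ≤ i) :
    failBefore b (i + 1) = failBefore b i + if b i = false then 1 else 0 := by
  rw [failBefore, failBefore, Nat.Ico_succ_right_eq_insert_Ico hi, Finset.filter_insert]
  split_ifs <;> simp_all

lemma succBefore_succ {i : ℕ} (hi : 1 ≤ i) :
    succBefore b (i + 1) = succBefore b i + if b i = true then 1 else 0 := by
  rw [succBefore, succBefore, Nat.Ico_succ_right_eq_insert_Ico hi, Finset.filter_insert]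
  split_ifs <;> simp_all

lemma failBefore_mono : Monotone (failBefore b) := fun _ _ h =>
  Finset.card_le_card (Finset.filter_subset_filter _ (Finset.Ico_subset_Ico le_rfl h))

theorem succCount_failBefore {L : ℕ} (hL : L = 0 ∨ b L = false) :
    succCount b (failBefore b (L + 1)) = succBefore b (L + 1) := by
  rw [succCount, succBefore, ← Set.encard_coe_eq_coe_finsetCard]
  congr 1
  ext i
  simp only [Set.mem_ofPred_eq, Finset.coe_filter, Finset.mem_Ico, Nat.cast_lt]
  constructor
  · rintro ⟨hi, hbi, hlt⟩
    exact ⟨⟨hi, lt_of_not_ge fun h => hlt.not_ge (failBefore_mono b h)⟩, hbi⟩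
  · rintro ⟨⟨hi, hiL⟩, hbi⟩
    obtain rfl | hbL := hL
    · omega
    have hiL' : i < L := lt_of_le_of_ne (by omega) (by rintro rfl; simp_all)
    refine ⟨hi, hbi, ?_⟩
    calc failBefore b i ≤ failBefore b L := failBefore_mono b hiL'.le
      _ < failBefore b (L + 1) := by rw [failBefore_succ b (by omega), if_pos hbL]; omega

end Coins

section Walk

variable (ξ : ℤ → ℕ → Bool) (x : ℤ)

def visitCount (z : ℤ) (n : ℕ) : ℕ := Nat.count (fun m => cwalk ξ x m = z) n

def upCount (z : ℤ) (n : ℕ) : ℕ :=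
  Nat.count (fun m => cwalk ξ x m = z ∧ cwalk ξ x (m + 1) = z + 1) n

def downCount (z : ℤ) (n : ℕ) : ℕ :=
  Nat.count (fun m => cwalk ξ x m = z ∧ cwalk ξ x (m + 1) = z - 1) n

lemma cwalk_zero : cwalk ξ x 0 = x := rfl

lemma visitCount_succ (z : ℤ) (n : ℕ) :
    visitCount ξ x z (n + 1) = visitCount ξ x z n + if cwalk ξ x n = z then 1 else 0 :=
  Nat.count_succ _ n

lemma walkAux_snd (n : ℕ) (z : ℤ) : (walkAux ξ x n).2 z = visitCount ξ x z (n + 1) := by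
  induction n with
  | zero =>
    change (if z = x then 1 else 0) = _
    rw [visitCount_succ, visitCount, Nat.count_zero, cwalk_zero]
    simp only [eq_comm, zero_add]
  | succ n ih =>
    change (if z = cwalk ξ x (n + 1) then _ else _) = _
    rw [visitCount_succ, ih]
    by_cases h : cwalk ξ x (n + 1) = z
    · rw [if_pos h.symm, if_pos h]
    · rw [if_neg (Ne.symm h), if_neg h, add_zero]

lemma cwalk_succ (n : ℕ) :
    cwalk ξ x (n + 1) = cwalk ξ x n +
      if ξ (cwalk ξ x n) (visitCount ξ x (cwalk ξ x n) n + 1) = true then 1 else -1 := by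
  rw [show visitCount ξ x (cwalk ξ x n) n + 1 = (walkAux ξ x n).2 (cwalk ξ x n) by
    rw [walkAux_snd, visitCount_succ, if_pos rfl]]
  rfl

lemma cwalk_succ_eq_add_one_iff (n : ℕ) :
    cwalk ξ x (n + 1) = cwalk ξ x n + 1 ↔
      ξ (cwalk ξ x n) (visitCount ξ x (cwalk ξ x n) n + 1) = true := by
  rw [cwalk_succ]
  split_ifs with h <;> simp [h]

lemma cwalk_succ_eq_sub_one_iff (n : ℕ) :
    cwalk ξ x (n + 1) = cwalk ξ x n - 1 ↔
      ξ (cwalk ξ x n) (visitCount ξ x (cwalk ξ x n) n + 1) = false := by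
  rw [cwalk_succ]
  split_ifs with h <;> simp [h, sub_eq_add_neg]

lemma cwalk_succ_eq_add_one_or_sub_one (n : ℕ) :
    cwalk ξ x (n + 1) = cwalk ξ x n + 1 ∨ cwalk ξ x (n + 1) = cwalk ξ x n - 1 := by
  rw [cwalk_succ_eq_add_one_iff, cwalk_succ_eq_sub_one_iff]
  cases ξ (cwalk ξ x n) (visitCount ξ x (cwalk ξ x n) n + 1) <;> simp

lemma failBefore_visitCount (z : ℤ) (n : ℕ) :
    failBefore (ξ z) (visitCount ξ x z n + 1) = downCount ξ x z n := by
  induction n with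
  | zero => simp [failBefore, downCount, visitCount]
  | succ n ih =>
    rw [visitCount_succ, downCount, Nat.count_succ, ← downCount, ← ih]
    by_cases hz : cwalk ξ x n = z
    · subst hz
      rw [if_pos rfl, failBefore_succ _ (by omega)]
      simp [cwalk_succ_eq_sub_one_iff]
    · simp [hz]

lemma succBefore_visitCount (z : ℤ) (n : ℕ) :
    succBefore (ξ z) (visitCount ξ x z n + 1) = upCount ξ x z n := by
  induction n with
  | zero => simp [succBefore, upCount, visitCount]
  | succ n ih =>
    rw [visitCount_succ, upCount, Nat.count_succ, ← upCount, ← ih]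
    by_cases hz : cwalk ξ x n = z
    · subst hz
      rw [if_pos rfl, succBefore_succ _ (by omega)]
      simp [cwalk_succ_eq_add_one_iff]
    · simp [hz]

/-- Jumps across the edge `{z, z + 1}` alternate in direction. -/
lemma upCount_add_ite (z : ℤ) (n : ℕ) :
    upCount ξ x z n + (if z < x then 1 else 0) =
      downCount ξ x (z + 1) n + if z < cwalk ξ x n then 1 else 0 := by
  induction n with
  | zero => rfl
  | succ n ih =>
    rw [upCount, downCount, Nat.count_succ, Nat.count_succ, ← upCount, ← downCount]
    have := cwalk_succ_eq_add_one_or_sub_one ξ x n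
    split_ifs at ih ⊢ <;> omega

/-- Between two visits to `z` the walk stays on the side of `z` chosen by the last coin at `z`. -/
lemma coin_visitCount_eq_false {z : ℤ} {n : ℕ} (hv : 0 < visitCount ξ x z n)
    (hlt : cwalk ξ x n < z) : ξ z (visitCount ξ x z n) = false := by
  induction n with
  | zero => simp [visitCount] at hv
  | succ n ih =>
    have hstep := cwalk_succ_eq_add_one_or_sub_one ξ x n
    rw [visitCount_succ] at hv ⊢
    by_cases hz : cwalk ξ x n = z
    · subst hz
      rw [if_pos rfl, ← cwalk_succ_eq_sub_one_iff]
      omega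
    · rw [if_neg hz, add_zero] at hv ⊢
      exact ih hv (by omega)

end Walk

section RightJumps

variable (ξ : ℤ → ℕ → Bool)

/-- The times counted by `U'_k`. -/
def rightJumps (k : ℕ) : Set ℕ :=
  {n : ℕ | (∀ m, m ≤ n → cwalk ξ 1 m ≠ 0) ∧ cwalk ξ 1 n = (k : ℤ) ∧
    cwalk ξ 1 (n + 1) = (k : ℤ) + 1}

lemma upCount_le_encard_rightJumps {n : ℕ} (hn : ∀ m ≤ n, cwalk ξ 1 m ≠ 0) (k : ℕ) :
    (upCount ξ 1 k n : ℕ∞) ≤ (rightJumps ξ k).encard := by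
  rw [upCount, Nat.count_eq_card_filter_range, ← Set.encard_coe_eq_coe_finsetCard]
  refine Set.encard_mono fun m hm => ?_
  simp only [Finset.coe_filter, Finset.mem_range, Set.mem_ofPred_eq] at hm
  exact ⟨fun m' hm' => hn m' (by omega), hm.2⟩

lemma downCount_add_one_of_cwalk_eq (j : ℕ) {n : ℕ} (hn : cwalk ξ 1 n = (j : ℤ) + 1) :
    downCount ξ 1 ((j : ℤ) + 1) n + 1 = upCount ξ 1 j n + if j = 0 then 1 else 0 := by
  have := upCount_add_ite ξ 1 j n
  split_ifs at this ⊢ <;> omega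

/-- The extra `1` at `k = 0` is the jump from `0` to `1` implicit in `U₀ = 1`. -/
theorem encard_rightJumps_add_le (k : ℕ) :
    (rightJumps ξ k).encard + (if k = 0 then 1 else 0) ≤ Uproc ξ 1 k := by
  induction k with
  | zero =>
    have : rightJumps ξ 0 = ∅ :=
      Set.eq_empty_of_forall_notMem fun n hn => hn.1 n le_rfl (by exact_mod_cast hn.2.1)
    simp [this, Uproc]
  | succ j ih =>
    set z : ℤ := (j : ℤ) + 1 with hz
    rw [if_neg j.succ_ne_zero, add_zero, Uproc, succCount, ← hz]
    have hinj : Set.InjOn (fun n => visitCount ξ 1 z n + 1) (rightJumps ξ (j + 1)) :=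
      fun a ha b hb hab => Nat.count_injective (p := fun m => cwalk ξ 1 m = z)
        (by simpa [hz] using ha.2.1) (by simpa [hz] using hb.2.1) (Nat.add_right_cancel hab)
    refine hinj.encard_image.symm.trans_le (Set.encard_mono ?_)
    rintro _ ⟨n, ⟨halive, hn, hn1⟩, rfl⟩
    push_cast at hn hn1
    rw [← hz] at hn hn1
    have hcoin := (cwalk_succ_eq_add_one_iff ξ 1 n).1 (by rw [hn1, hn])
    rw [hn] at hcoin
    refine ⟨Nat.le_add_left 1 _, hcoin, ?_⟩
    rw [failBefore_visitCount]
    calc (downCount ξ 1 z n : ℕ∞) < downCount ξ 1 z n + 1 := by exact_mod_cast Nat.lt_succ_self _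
      _ = upCount ξ 1 j n + (if j = 0 then 1 else 0) := by
          exact_mod_cast downCount_add_one_of_cwalk_eq ξ j hn
      _ ≤ (rightJumps ξ j).encard + (if j = 0 then 1 else 0) := by
          gcongr; exact upCount_le_encard_rightJumps ξ halive j
      _ ≤ Uproc ξ 1 j := ih

lemma encard_rightJumps_eq_upCount (hT : ∃ n, cwalk ξ 1 n = 0) (k : ℕ) :
    (rightJumps ξ k).encard = upCount ξ 1 k (Nat.find hT) := by
  rw [upCount, Nat.count_eq_card_filter_range, ← Set.encard_coe_eq_coe_finsetCard]
  congr 1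
  ext n
  simp [rightJumps, Nat.lt_find_iff]

theorem upCount_add_ite_eq_Uproc (hT : ∃ n, cwalk ξ 1 n = 0) (k : ℕ) :
    (upCount ξ 1 k (Nat.find hT) : ℕ∞) + (if k = 0 then 1 else 0) = Uproc ξ 1 k := by
  set T := Nat.find hT
  induction k with
  | zero =>
    have : upCount ξ 1 0 T = 0 :=
      Nat.count_of_forall_not fun m hm h => Nat.find_min hT hm (by exact_mod_cast h.1)
    simp [this, Uproc]
  | succ j ih =>
    set z : ℤ := (j : ℤ) + 1 with hz
    have hdown : (downCount ξ 1 z T : ℕ∞) = Uproc ξ 1 j := by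
      rw [← ih]
      have := upCount_add_ite ξ 1 j T
      rw [Nat.find_spec hT, ← hz] at this
      split_ifs at this ⊢ <;> norm_cast <;> omega
    have hlast : visitCount ξ 1 z T = 0 ∨ ξ z (visitCount ξ 1 z T) = false := by
      refine (Nat.eq_zero_or_pos _).imp_right fun hv => coin_visitCount_eq_false ξ 1 hv ?_
      rw [Nat.find_spec hT]
      omega
    rw [if_neg j.succ_ne_zero, add_zero, Uproc, ← hdown, ← hz, ← failBefore_visitCount,
      succCount_failBefore _ hlast, succBefore_visitCount, Nat.cast_succ]

end RightJumps

/-- Lemma 2.1. For the coin-tossing construction with `U₀ = 1` and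
`X₀ = 1` built from the same coin array `ξ`: `U'_k ≤ U_k` for all `k ≥ 1`, and if
`τ₀^X < ∞` then `U'_k = U_k` for all `k ≥ 1`.  Here
`U'_k = |{0 ≤ n < τ₀^X : X_n = k, X_{n+1} = k + 1}|`. -/
theorem forward_bp_right_jumps (ξ : ℤ → ℕ → Bool) :
    (∀ k : ℕ, 1 ≤ k →
      {n : ℕ | (∀ m, m ≤ n → cwalk ξ 1 m ≠ 0) ∧ cwalk ξ 1 n = (k : ℤ) ∧
          cwalk ξ 1 (n + 1) = (k : ℤ) + 1}.encard ≤ Uproc ξ 1 k) ∧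
    ((∃ n : ℕ, 0 < n ∧ cwalk ξ 1 n = 0) →
      ∀ k : ℕ, 1 ≤ k →
        {n : ℕ | (∀ m, m ≤ n → cwalk ξ 1 m ≠ 0) ∧ cwalk ξ 1 n = (k : ℤ) ∧
            cwalk ξ 1 (n + 1) = (k : ℤ) + 1}.encard = Uproc ξ 1 k) := by
  refine ⟨fun k hk => ?_, fun ⟨n, _, hn⟩ k hk => ?_⟩
  · have := encard_rightJumps_add_le ξ k
    rwa [if_neg (by omega), add_zero] at this
  · have hT : ∃ n, cwalk ξ 1 n = 0 := ⟨n, hn⟩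
    have := upCount_add_ite_eq_Uproc ξ hT k
    rwa [if_neg (by omega), add_zero, ← encard_rightJumps_eq_upCount ξ hT] at this

end ERW
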